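/- Let φ be the test function φ(x) = 1 for |x| ≤ 1, φ(x) = (1+(|x|-1)⁴)^{-(n+2s)/4} for |x| ≥ 1, with s ∈ (0,1]. Then there exists C > 0 with |Δφ(x)| ≤ C·φ(x) for all x ∈ ℝⁿ. -/

import Mathlib

/-!
With `p = (n + 2 s) / 4` and the tail `f r = (1 + (r - 1) ^ 4) ^ (-p)`, write `φ x = ψ (‖x‖ ^ 2)`
where `ψ t = 1` for `t ≤ 1` and `ψ t = f (√t)` otherwise (`TestFunction.tail` and
`TestFunction.profile`). Working in `t = ‖x‖ ^ 2` rather than `‖x‖` keeps `ψ` smooth near the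
origin, and `ψ` is `C²` across `t = 1` because `f' 1 = f'' 1 = 0`. Then
`Δφ x = 4 t ψ'' t + 2 n ψ' t`, which for `t > 1` and `r = √t` is `f'' r + (n - 1) f' r / r`.
Finally `f'` and `f''` are bounded multiples of `f`: with `u = r - 1` and `B = 1 + u ^ 4`,
`f' = -4 p u³ / B · f` and `f'' = (16 p (p + 1) u⁶ / B² - 12 p u² / B) · f`, while `|u|³, u² ≤ B`
and `u⁶ ≤ B²`.
-/

open scoped RealInnerProductSpace

theorem hasDerivAt_ite_le {a c : ℝ} {g g' : ℝ → ℝ} (hg : ∀ t, a ≤ t → HasDerivAt g (g' t) t)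
    (hga : g a = c) (hg'a : g' a = 0) (t : ℝ) :
    HasDerivAt (fun t => if t ≤ a then c else g t) (if t ≤ a then 0 else g' t) t := by
  rcases lt_trichotomy t a with hlt | rfl | hgt
  · have hconst : (fun t => if t ≤ a then c else g t) =ᶠ[nhds t] fun _ => c := by
      filter_upwards [Iio_mem_nhds hlt] with s (hs : s < a)
      simp [hs.le]
    simpa [hlt.le] using (hasDerivAt_const t c).congr_of_eventuallyEq hconst
  · have hleft : HasDerivWithinAt (fun s => if s ≤ t then c else g s) 0 (Set.Iic t) t :=
      (hasDerivWithinAt_const t _ c).congr (fun s (hs : s ≤ t) => by simp [hs]) (by simp)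
    have hright : HasDerivWithinAt (fun s => if s ≤ t then c else g s) 0 (Set.Ici t) t := by
      refine ((hg t le_rfl).hasDerivWithinAt.congr (fun s (hs : t ≤ s) => ?_) ?_).congr_deriv hg'a
      · rcases hs.eq_or_lt with rfl | hlt
        · simp [hga]
        · simp [not_le.mpr hlt]
      · simp [hga]
    have := hleft.union hright
    rw [Set.Iic_union_Ici, hasDerivWithinAt_univ] at this
    simpa using this
  · have hright : (fun t => if t ≤ a then c else g t) =ᶠ[nhds t] g := by
      filter_upwards [Ioi_mem_nhds hgt] with s (hs : a < s)
      simp [not_le.mpr hs]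
    simpa [not_le.mpr hgt] using (hg t hgt.le).congr_of_eventuallyEq hright

section NormSq

variable {E : Type*} [NormedAddCommGroup E] [InnerProductSpace ℝ E] {G G' G'' : ℝ → ℝ}

theorem hasFDerivAt_comp_norm_sq {g' : ℝ} {x : E} (hG : HasDerivAt G g' (‖x‖ ^ 2)) :
    HasFDerivAt (fun z => G (‖z‖ ^ 2)) (g' • 2 • innerSL ℝ x) x :=
  hG.comp_hasFDerivAt x (hasStrictFDerivAt_norm_sq x).hasFDerivAt

theorem fderiv_fderiv_comp_norm_sq_apply (hG : ∀ t, HasDerivAt G (G' t) t)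
    (hG' : ∀ t, HasDerivAt G' (G'' t) t) (x v : E) :
    fderiv ℝ (fun y => fderiv ℝ (fun z => G (‖z‖ ^ 2)) y v) x v =
      4 * G'' (‖x‖ ^ 2) * ⟪x, v⟫ ^ 2 + 2 * G' (‖x‖ ^ 2) * ‖v‖ ^ 2 := by
  have hfirst : (fun y => fderiv ℝ (fun z => G (‖z‖ ^ 2)) y v) =
      fun y => G' (‖y‖ ^ 2) * (2 * ⟪y, v⟫) := by
    funext y
    simp [(hasFDerivAt_comp_norm_sq (hG _)).fderiv]
  have hinner : HasFDerivAt (fun y : E => 2 * ⟪y, v⟫) ((2 : ℝ) • innerSL ℝ v) x := by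
    simpa [real_inner_comm] using ((innerSL ℝ v).hasFDerivAt (x := x)).const_mul 2
  rw [hfirst, ((hasFDerivAt_comp_norm_sq (hG' _)).fun_mul hinner).fderiv]
  simp only [add_apply, smul_apply, coe_innerSL_apply,
    real_inner_self_eq_norm_sq, smul_eq_mul, nsmul_eq_mul, Nat.cast_ofNat]
  ring

theorem OrthonormalBasis.sum_fderiv_fderiv_comp_norm_sq {ι : Type*} [Fintype ι]
    (b : OrthonormalBasis ι ℝ E) (hG : ∀ t, HasDerivAt G (G' t) t)
    (hG' : ∀ t, HasDerivAt G' (G'' t) t) (x : E) :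
    ∑ i, fderiv ℝ (fun y => fderiv ℝ (fun z => G (‖z‖ ^ 2)) y (b i)) x (b i) =
      4 * ‖x‖ ^ 2 * G'' (‖x‖ ^ 2) + 2 * Fintype.card ι * G' (‖x‖ ^ 2) := by
  simp only [fderiv_fderiv_comp_norm_sq_apply hG hG', Finset.sum_add_distrib, ← Finset.mul_sum,
    b.sum_sq_inner_left, b.orthonormal.1, one_pow, Finset.sum_const, Finset.card_univ,
    nsmul_eq_mul]
  ring

end NormSq

theorem hasDerivAt_comp_sqrt {k : ℝ → ℝ} {k' t : ℝ} (hk : HasDerivAt k k' (√t)) (ht : 0 < t) :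
    HasDerivAt (fun t => k (√t)) (k' / (2 * √t)) t :=
  (hk.comp t (Real.hasDerivAt_sqrt ht.ne')).congr_deriv (by ring)

theorem hasDerivAt_comp_sqrt_div_two_sqrt {k : ℝ → ℝ} {k' t : ℝ} (hk : HasDerivAt k k' (√t))
    (ht : 0 < t) :
    HasDerivAt (fun t => k (√t) / (2 * √t)) ((k' - k (√t) / √t) / (4 * t)) t := by
  have hsqrt : 0 < √t := Real.sqrt_pos.mpr ht
  refine ((hasDerivAt_comp_sqrt hk ht).div ((Real.hasDerivAt_sqrt ht.ne').const_mul 2)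
    (by positivity)).congr_deriv ?_
  have hsq : t = √t ^ 2 := (Real.sq_sqrt ht.le).symm
  generalize √t = s at hsqrt hsq ⊢
  subst hsq
  field_simp
  ring

noncomputable section

namespace TestFunction

def tail (p r : ℝ) : ℝ := (1 + (r - 1) ^ 4) ^ (-p)

def tailDeriv (p r : ℝ) : ℝ := -4 * p * (r - 1) ^ 3 / (1 + (r - 1) ^ 4) * tail p r

def tailDeriv2 (p r : ℝ) : ℝ :=
  (16 * p * (p + 1) * (r - 1) ^ 6 / (1 + (r - 1) ^ 4) ^ 2 -
    12 * p * (r - 1) ^ 2 / (1 + (r - 1) ^ 4)) * tail p r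

variable (p : ℝ)

lemma tail_pos (r : ℝ) : 0 < tail p r := Real.rpow_pos_of_pos (by positivity) _

lemma hasDerivAt_one_add_sub_one_pow_four (r : ℝ) :
    HasDerivAt (fun r => 1 + (r - 1) ^ 4) (4 * (r - 1) ^ 3) r := by
  simpa using (((hasDerivAt_id r).sub_const 1).fun_pow 4).const_add 1

lemma hasDerivAt_tail (r : ℝ) : HasDerivAt (tail p) (tailDeriv p r) r := by
  have hB : 0 < 1 + (r - 1) ^ 4 := by positivity
  refine ((hasDerivAt_one_add_sub_one_pow_four r).rpow_const (p := -p)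
    (Or.inl hB.ne')).congr_deriv ?_
  rw [tailDeriv, tail, Real.rpow_sub_one hB.ne']
  ring

lemma hasDerivAt_tailDeriv (r : ℝ) : HasDerivAt (tailDeriv p) (tailDeriv2 p r) r := by
  have hB : 0 < 1 + (r - 1) ^ 4 := by positivity
  have hcube : HasDerivAt (fun r => -4 * p * (r - 1) ^ 3) (-12 * p * (r - 1) ^ 2) r :=
    ((((hasDerivAt_id r).sub_const 1).fun_pow 3).const_mul (-4 * p)).congr_deriv (by simp; ring)
  refine ((hcube.fun_div (hasDerivAt_one_add_sub_one_pow_four r) hB.ne').fun_mul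
    (hasDerivAt_tail p r)).congr_deriv ?_
  rw [tailDeriv2, tailDeriv]
  field_simp
  ring

lemma abs_pow_three_le_one_add_pow_four (u : ℝ) : |u ^ 3| ≤ 1 + u ^ 4 := by
  rw [abs_le]
  constructor <;>
    nlinarith [sq_nonneg (u ^ 2 - u), sq_nonneg (u ^ 2 + u), sq_nonneg (u ^ 2 - 1 / 2)]

lemma abs_tailDeriv_le (r : ℝ) : |tailDeriv p r| ≤ 4 * |p| * tail p r := by
  have hB : 0 < 1 + (r - 1) ^ 4 := by positivity
  rw [tailDeriv, abs_mul, abs_of_pos (tail_pos p r)]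
  refine mul_le_mul_of_nonneg_right ?_ (tail_pos p r).le
  rw [abs_div, abs_of_pos hB, div_le_iff₀ hB, abs_mul, abs_mul, abs_neg, abs_of_pos four_pos]
  gcongr
  exact abs_pow_three_le_one_add_pow_four (r - 1)

lemma abs_tailDeriv2_le (r : ℝ) :
    |tailDeriv2 p r| ≤ (16 * |p * (p + 1)| + 12 * |p|) * tail p r := by
  set u := r - 1
  have hB : 0 < 1 + u ^ 4 := by positivity
  have hsix : u ^ 6 / (1 + u ^ 4) ^ 2 ≤ 1 := by
    rw [div_le_one (by positivity)]
    nlinarith [sq_nonneg (u ^ 4 - u ^ 2), sq_nonneg u]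
  have htwo : u ^ 2 / (1 + u ^ 4) ≤ 1 := by
    rw [div_le_one hB]
    nlinarith [sq_nonneg (u ^ 2 - 1), sq_nonneg u]
  rw [tailDeriv2, abs_mul, abs_of_pos (tail_pos p r)]
  refine mul_le_mul_of_nonneg_right ?_ (tail_pos p r).le
  calc |16 * p * (p + 1) * u ^ 6 / (1 + u ^ 4) ^ 2 - 12 * p * u ^ 2 / (1 + u ^ 4)|
      = |16 * (p * (p + 1)) * (u ^ 6 / (1 + u ^ 4) ^ 2) - 12 * p * (u ^ 2 / (1 + u ^ 4))| := by
        ring_nf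
    _ ≤ 16 * |p * (p + 1)| * (u ^ 6 / (1 + u ^ 4) ^ 2) + 12 * |p| * (u ^ 2 / (1 + u ^ 4)) := by
        refine (abs_sub _ _).trans_eq ?_
        simp only [abs_mul, abs_of_nonneg (by positivity : 0 ≤ u ^ 6 / (1 + u ^ 4) ^ 2),
          abs_of_nonneg (by positivity : 0 ≤ u ^ 2 / (1 + u ^ 4)),
          abs_of_pos (by norm_num : (0 : ℝ) < 16), abs_of_pos (by norm_num : (0 : ℝ) < 12)]
    _ ≤ 16 * |p * (p + 1)| + 12 * |p| :=
        add_le_add (mul_le_of_le_one_right (by positivity) hsix)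
          (mul_le_of_le_one_right (by positivity) htwo)

def profile (p t : ℝ) : ℝ := if t ≤ 1 then 1 else tail p (√t)

def profileDeriv (p t : ℝ) : ℝ := if t ≤ 1 then 0 else tailDeriv p (√t) / (2 * √t)

def profileDeriv2 (p t : ℝ) : ℝ :=
  if t ≤ 1 then 0 else (tailDeriv2 p (√t) - tailDeriv p (√t) / √t) / (4 * t)

lemma profile_pos (t : ℝ) : 0 < profile p t := by
  unfold profile
  split_ifs
  exacts [one_pos, tail_pos p _]

lemma hasDerivAt_profile (t : ℝ) : HasDerivAt (profile p) (profileDeriv p t) t :=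
  hasDerivAt_ite_le (fun t ht => hasDerivAt_comp_sqrt (hasDerivAt_tail p _) (by linarith))
    (by simp [tail]) (by simp [tailDeriv]) t

lemma hasDerivAt_profileDeriv (t : ℝ) : HasDerivAt (profileDeriv p) (profileDeriv2 p t) t :=
  hasDerivAt_ite_le
    (fun t ht => hasDerivAt_comp_sqrt_div_two_sqrt (hasDerivAt_tailDeriv p _) (by linarith))
    (by simp [tailDeriv]) (by simp [tailDeriv, tailDeriv2]) t

lemma abs_radial_laplacian_profile_le (N t : ℝ) :
    |4 * t * profileDeriv2 p t + 2 * N * profileDeriv p t| ≤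
      (16 * |p * (p + 1)| + 12 * |p| + 4 * |p| * |N - 1|) * profile p t := by
  unfold profile profileDeriv profileDeriv2
  split_ifs with ht
  · simp only [mul_zero, add_zero, abs_zero, mul_one]
    positivity
  · have hr : 1 < √t := Real.lt_sqrt_of_sq_lt (by linarith)
    have hr0 : 0 < √t := by linarith
    have hsq : t = √t ^ 2 := (Real.sq_sqrt (by linarith)).symm
    have hradial : 4 * t * ((tailDeriv2 p √t - tailDeriv p √t / √t) / (4 * t)) +
        2 * N * (tailDeriv p √t / (2 * √t)) =
          tailDeriv2 p √t + (N - 1) * tailDeriv p √t / √t := by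
      rw [hsq]
      field_simp
      ring
    rw [hradial]
    calc |tailDeriv2 p √t + (N - 1) * tailDeriv p √t / √t|
        ≤ |tailDeriv2 p √t| + |N - 1| * |tailDeriv p √t| := by
          refine (abs_add_le _ _).trans (add_le_add_right ?_ _)
          rw [abs_div, abs_mul, abs_of_pos hr0]
          exact div_le_self (by positivity) hr.le
      _ ≤ (16 * |p * (p + 1)| + 12 * |p|) * tail p √t + |N - 1| * (4 * |p| * tail p √t) :=
          add_le_add (abs_tailDeriv2_le p _) (mul_le_mul_of_nonneg_left (abs_tailDeriv_le p _)
            (abs_nonneg _))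
      _ = (16 * |p * (p + 1)| + 12 * |p| + 4 * |p| * |N - 1|) * tail p √t := by ring

end TestFunction

end

open TestFunction in
theorem test_function_laplacian_bound_general (n : ℕ) (s : ℝ) (φ : EuclideanSpace ℝ (Fin n) → ℝ)
    (hφ : ∀ x, φ x = if ‖x‖ ≤ 1 then 1 else
      (1 + (‖x‖ - 1) ^ 4) ^ (-((n : ℝ) + 2 * s) / 4)) :
    ∃ C > 0, ∀ x,
      |∑ i : Fin n, fderiv ℝ (fun y => fderiv ℝ φ y (EuclideanSpace.single i 1)) x
          (EuclideanSpace.single i 1)| ≤ C * φ x := by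
  set p := ((n : ℝ) + 2 * s) / 4
  have hφ_eq : φ = fun x => profile p (‖x‖ ^ 2) := by
    funext x
    simp only [hφ, profile, tail, sq_le_one_iff₀ (norm_nonneg x), Real.sqrt_sq (norm_nonneg x), p,
      neg_div]
  set C := 16 * |p * (p + 1)| + 12 * |p| + 4 * |p| * |(n : ℝ) - 1|
  refine ⟨C + 1, by positivity, fun x => ?_⟩
  have hlaplacian := (EuclideanSpace.basisFun (Fin n) ℝ).sum_fderiv_fderiv_comp_norm_sq
    (hasDerivAt_profile p) (hasDerivAt_profileDeriv p) x
  simp only [EuclideanSpace.basisFun_apply, Fintype.card_fin] at hlaplacian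
  rw [hφ_eq, hlaplacian]
  calc _ ≤ C * profile p (‖x‖ ^ 2) := abs_radial_laplacian_profile_le p n _
    _ ≤ (C + 1) * profile p (‖x‖ ^ 2) := by
      gcongr
      · exact (profile_pos p _).le
      · linarith

/-- For the test function `φ(x) = 1` for `|x| ≤ 1`, `φ(x) = (1+(|x|-1)⁴)^{-(n+2s)/4}` for
`|x| ≥ 1`, with `s ∈ (0,1]`, there is `C > 0` with `|Δφ(x)| ≤ C φ(x)` for all `x`. -/
theorem test_function_laplacian_bound (n : ℕ) (hn : 1 ≤ n) (s : ℝ) (hs0 : 0 < s)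
    (hs1 : s ≤ 1) (φ : EuclideanSpace ℝ (Fin n) → ℝ)
    (hφ : ∀ x, φ x = if ‖x‖ ≤ 1 then 1 else
      (1 + (‖x‖ - 1) ^ 4) ^ (-((n : ℝ) + 2 * s) / 4)) :
    ∃ C > 0, ∀ x,
      |∑ i : Fin n, fderiv ℝ (fun y => fderiv ℝ φ y (EuclideanSpace.single i 1)) x
          (EuclideanSpace.single i 1)| ≤ C * φ x :=
  test_function_laplacian_bound_general n s φ hφ
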